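/- arXiv:math/0703184 — 2 statements merged into one kernel-verified Lean document; each statement's English description precedes it below -/
import Mathlib

section
/- The function f(x) = (√b · x)/(√b + √((x−1)(x−b))) is strictly decreasing on the interval (b, ∞), for any fixed b > 1. Consequently, if b < x < x', then f(x) > f(x'). -/
private lemma key_ineq (b x : ℝ) (hb : 1 < b) (hx : b < x) :
    2 * (Real.sqrt b * Real.sqrt ((x - 1) * (x - b))) < (1 + b) * x - 2 * b := by
  have hP : (0:ℝ) ≤ (x - 1) * (x - b) := by nlinarith
  have hb0 : (0:ℝ) ≤ b := by linarith
  have hs2 : Real.sqrt b ^ 2 = b := Real.sq_sqrt hb0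
  have hp2 : Real.sqrt ((x - 1) * (x - b)) ^ 2 = (x - 1) * (x - b) := Real.sq_sqrt hP
  have hsp2 : (Real.sqrt b * Real.sqrt ((x - 1) * (x - b))) ^ 2 = b * ((x - 1) * (x - b)) := by
    rw [mul_pow, hs2, hp2]
  have hsp : 0 ≤ Real.sqrt b * Real.sqrt ((x - 1) * (x - b)) :=
    mul_nonneg (Real.sqrt_nonneg _) (Real.sqrt_nonneg _)
  have hT : 0 < (1 + b) * x - 2 * b := by nlinarith
  have hbx : 0 < ((b - 1) * x) ^ 2 :=
    pow_pos (mul_pos (by linarith) (by linarith)) 2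
  nlinarith [hsp2, hsp, hT, hbx]

private lemma main_ineq (b x x' : ℝ) (hb : 1 < b) (hx : b < x) (hxx' : x < x') :
    Real.sqrt b * x / (Real.sqrt b + Real.sqrt ((x - 1) * (x - b))) >
    Real.sqrt b * x' / (Real.sqrt b + Real.sqrt ((x' - 1) * (x' - b))) := by
  have hb0 : (0:ℝ) < b := by linarith
  have hs0 : 0 < Real.sqrt b := Real.sqrt_pos.mpr hb0
  have hx' : b < x' := lt_trans hx hxx'
  have hP : (0:ℝ) ≤ (x - 1) * (x - b) := by nlinarith
  have hP' : (0:ℝ) ≤ (x' - 1) * (x' - b) := by nlinarith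
  set s := Real.sqrt b with hsdef
  set p := Real.sqrt ((x - 1) * (x - b)) with hpdef
  set p' := Real.sqrt ((x' - 1) * (x' - b)) with hp'def
  have hp : 0 ≤ p := Real.sqrt_nonneg _
  have hp' : 0 ≤ p' := Real.sqrt_nonneg _
  have hs2 : s ^ 2 = b := Real.sq_sqrt (le_of_lt hb0)
  have hp2 : p ^ 2 = (x - 1) * (x - b) := Real.sq_sqrt hP
  have hp'2 : p' ^ 2 = (x' - 1) * (x' - b) := Real.sq_sqrt hP'
  have hA : 0 < s + p := by linarith
  have hA' : 0 < s + p' := by linarith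
  have key := key_ineq b x hb hx
  rw [← hsdef, ← hpdef] at key
  rw [gt_iff_lt, div_lt_div_iff₀ hA' hA]
  have hx0 : 0 < x := by linarith
  have hx'0 : 0 < x' := by linarith
  have hdiff : 0 < x' - x := by linarith
  have e : (x * p') ^ 2 - (x' * p + s * (x' - x)) ^ 2
      = (x' - x) * x' * ((1 + b) * x - 2 * b - 2 * (s * p)) := by
    linear_combination x ^ 2 * hp'2 - x' ^ 2 * hp2 - (x' - x) ^ 2 * hs2
  have epos : 0 < (x' - x) * x' * ((1 + b) * x - 2 * b - 2 * (s * p)) :=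
    mul_pos (mul_pos hdiff hx'0) (by linarith)
  have hkey2 : (x' * p + s * (x' - x)) ^ 2 < (x * p') ^ 2 := by linarith
  have hR : 0 ≤ x' * p + s * (x' - x) := by positivity
  have hL : 0 ≤ x * p' := by positivity
  have hmain : x' * p + s * (x' - x) < x * p' := by nlinarith [hkey2, hR, hL]
  nlinarith [mul_pos hs0 (show 0 < x * (s + p') - x' * (s + p) by linarith)]

/-- For fixed `b > 1`, the function
`f(x) = √b·x / (√b + √((x−1)(x−b)))` is strictly decreasing on `(b, ∞)`;
consequently if `b < x < x'` then `f x > f x'`. -/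
theorem hilbert_midpoint_strictAnti (b : ℝ) (hb : 1 < b) :
    StrictAntiOn (fun x : ℝ => Real.sqrt b * x / (Real.sqrt b + Real.sqrt ((x - 1) * (x - b))))
      (Set.Ioi b) ∧
    ∀ x x' : ℝ, b < x → x < x' →
      Real.sqrt b * x / (Real.sqrt b + Real.sqrt ((x - 1) * (x - b))) >
      Real.sqrt b * x' / (Real.sqrt b + Real.sqrt ((x' - 1) * (x' - b))) := by
  constructor
  · intro x hx x' hx' hxx'
    exact main_ineq b x x' hb hx hxx'
  · intro x x' hx hxx'
    exact main_ineq b x x' hb hx hxx'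
end

section
/- The Hilbert midpoint of two points in a bounded open interval depends strictly monotonically on the right endpoint of the interval: if 0 < 1 < b < x < x', then the midpoint of 1 and b with respect to the Hilbert metric on (0, x) is strictly greater than the midpoint of 1 and b with respect to the Hilbert metric on (0, x'). In particular, the two midpoints are distinct. -/
/-- Hilbert distance on the interval `(0, t)` for points `0 < p ≤ q < t`. -/
noncomputable def hilbertDistZero (t p q : ℝ) : ℝ :=
  (1 / 2) * Real.log ((q / p) * ((t - p) / (t - q)))

lemma mid_poly (b t m : ℝ) (hb : 1 < b) (ht : b < t) (hm : m ∈ Set.Ioo 1 b)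
    (hmid : hilbertDistZero t 1 m = hilbertDistZero t m b) :
    m^2*(t-1)*(t-b) = b*(t-m)^2 := by
  obtain ⟨hm1, hmb⟩ := hm
  have hm0 : (0:ℝ) < m := by linarith
  have h1 : (0:ℝ) < t - 1 := by linarith
  have h2 : (0:ℝ) < t - m := by linarith
  have h3 : (0:ℝ) < t - b := by linarith
  have hb0 : (0:ℝ) < b := by linarith
  unfold hilbertDistZero at hmid
  have hA : (0:ℝ) < (m / 1) * ((t - 1) / (t - m)) := by positivity
  have hB : (0:ℝ) < (b / m) * ((t - m) / (t - b)) := by positivity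
  have hlog : Real.log ((m / 1) * ((t - 1) / (t - m))) =
      Real.log ((b / m) * ((t - m) / (t - b))) := by linarith
  have heq : (m / 1) * ((t - 1) / (t - m)) = (b / m) * ((t - m) / (t - b)) := by
    rw [← Real.exp_log hA, ← Real.exp_log hB, hlog]
  field_simp at heq
  nlinarith [heq]

/-- If `1 < b < x < x'`, the Hilbert midpoint of `1` and `b` in `(0, x)`
is strictly greater than the Hilbert midpoint of `1` and `b` in `(0, x')`;
in particular the two midpoints are distinct. -/
theorem hilbert_midpoint_strict_mono_in_endpoint
    (b x x' m m' : ℝ) (hb : 1 < b) (hx : b < x) (hx' : x < x')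
    (hm : m ∈ Set.Ioo 1 b) (hm' : m' ∈ Set.Ioo 1 b)
    (hmid : hilbertDistZero x 1 m = hilbertDistZero x m b)
    (hmid' : hilbertDistZero x' 1 m' = hilbertDistZero x' m' b) :
    m' < m ∧ m ≠ m' := by
  have E1 := mid_poly b x m hb hx hm hmid
  have E2 := mid_poly b x' m' hb (by linarith) hm' hmid'
  obtain ⟨hm1, hmb⟩ := hm
  obtain ⟨hm1', hmb'⟩ := hm'
  have hx0 : (0:ℝ) < x := by linarith
  -- h(x) = 0
  have hhx : (m^2-b)*x + 2*b*m - m^2*(1+b) = 0 := by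
    have h0 : x * ((m^2-b)*x + 2*b*m - m^2*(1+b)) = 0 := by linear_combination E1
    rcases mul_eq_zero.mp h0 with h | h
    · linarith
    · exact h
  -- m^2 > b
  have hm2b : b < m^2 := by
    have hne : b - m ≠ 0 := by linarith
    have hsq : (0:ℝ) < (b-m)^2 := by positivity
    nlinarith [hhx, hsq]
  -- F(x', m) > 0
  have hF : m^2*(x'-1)*(x'-b) - b*(x'-m)^2 = x'*((m^2-b)*(x'-x)) := by
    linear_combination x' * hhx
  have hFpos : 0 < m^2*(x'-1)*(x'-b) - b*(x'-m)^2 := by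
    rw [hF]
    exact mul_pos (by linarith) (mul_pos (by linarith) (by linarith))
  -- conclude m' < m
  have hbr : (0:ℝ) < (m+m')*(x'-1)*(x'-b) + b*(2*x'-m-m') := by
    have h1 : (0:ℝ) < (m+m')*(x'-1)*(x'-b) :=
      mul_pos (mul_pos (by linarith) (by linarith)) (by linarith)
    have h2 : (0:ℝ) < b*(2*x'-m-m') := mul_pos (by linarith) (by linarith)
    linarith
  have hid : m^2*(x'-1)*(x'-b) - b*(x'-m)^2 - (m'^2*(x'-1)*(x'-b) - b*(x'-m')^2)
      = (m-m')*((m+m')*(x'-1)*(x'-b)+b*(2*x'-m-m')) := by ring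
  have hlt : m' < m := by
    by_contra hge
    push_neg at hge
    have : (m-m')*((m+m')*(x'-1)*(x'-b)+b*(2*x'-m-m')) ≤ 0 :=
      mul_nonpos_of_nonpos_of_nonneg (by linarith) (le_of_lt hbr)
    nlinarith [E2, hFpos, hid]
  exact ⟨hlt, hlt.ne'⟩
end
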